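/- Let A ∈ ℝ^{m×n} and suppose x ∈ ℝⁿ satisfies Ax = b and 2‖x‖₀ < ‖z‖₀ for every nonzero z ∈ ℝⁿ with Az = 0 (i.e. ‖x‖₀ < spark(A)/2). Then x is the unique sparsest solution: every y ∈ ℝⁿ with Ay = b and ‖y‖₀ ≤ ‖x‖₀ satisfies y = x. -/

import Mathlib

/-!
If `y` were another solution with `‖y‖₀ ≤ ‖x‖₀`, then `y - x` would be a nonzero vector in the
kernel of `A` whose support lies in the union of the supports of `x` and `y`, so
`‖y - x‖₀ ≤ ‖y‖₀ + ‖x‖₀ ≤ 2 ‖x‖₀`, contradicting the spark bound.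
-/

/-- The number of nonzero entries of a vector (`‖x‖₀`). -/
noncomputable def l0 {n : ℕ} (x : Fin n → ℝ) : ℕ :=
  (Finset.univ.filter fun j => x j ≠ 0).card

theorem l0_eq_hammingNorm {n : ℕ} (x : Fin n → ℝ) : l0 x = hammingNorm x := rfl

theorem l0_sub_le {n : ℕ} (x y : Fin n → ℝ) : l0 (x - y) ≤ l0 x + l0 y := by
  simp only [l0_eq_hammingNorm]
  calc hammingNorm (x - y) = hammingDist y x := by rw [hammingDist_eq_hammingNorm, neg_add_eq_sub]
    _ ≤ hammingDist y 0 + hammingDist 0 x := hammingDist_triangle y 0 x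
    _ = hammingNorm x + hammingNorm y := by
      rw [hammingDist_zero_right, hammingDist_zero_left, add_comm]

/-- **Spark-based uniqueness of the sparsest solution.**
If `x` solves `A x = b` and `2 ‖x‖₀ < ‖z‖₀` for every nonzero `z` in the kernel of `A`
(i.e. `‖x‖₀ < spark(A)/2`), then `x` is the unique sparsest solution: every `y` with
`A y = b` and `‖y‖₀ ≤ ‖x‖₀` equals `x`. -/
theorem spark_uniqueness {m n : ℕ}
    (A : Matrix (Fin m) (Fin n) ℝ) (x : Fin n → ℝ) (b : Fin m → ℝ)
    (hx : A.mulVec x = b)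
    (hspark : ∀ z : Fin n → ℝ, z ≠ 0 → A.mulVec z = 0 → 2 * l0 x < l0 z) :
    ∀ y : Fin n → ℝ, A.mulVec y = b → l0 y ≤ l0 x → y = x := by
  intro y hy hle
  by_contra hne
  have hker : A.mulVec (y - x) = 0 := by rw [Matrix.mulVec_sub, hx, hy, sub_self]
  have hlarge := hspark (y - x) (sub_ne_zero.mpr hne) hker
  have hsmall := l0_sub_le y x
  omega
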